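/- The Poisson bracket on 1-forms satisfies the Jacobi identity: for all α, β, γ ∈ 𝒜ⁿ and every i ∈ {1,…,n}, one has {α, {β, γ}}_i + {β, {γ, α}}_i + {γ, {α, β}}_i = 0 in 𝒜. -/

import Mathlib

/-!
Write `∂_b` for the evolutionary vector field with characteristic `b` and `Bχ = η ∂_x χ`.
Then `{α,β}_i = ∂_{Bβ} α_i − ∂_{Bα} β_i`. Evolutionary fields commute with `∂_x`, so their
commutator is again evolutionary, `[∂_a, ∂_b] = ∂_{∂_a b − ∂_b a}`; as `B` commutes with every
`∂_a`, this reads `[∂_{Bx}, ∂_{By}] = ∂_{B{y,x}}`. Expanding the cyclic sum with these two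
identities, all terms cancel.
-/

open Finset

/-- An abstract model of the ring `𝒜` of differential polynomials in the formal
variables `u^i_{(s)}` (`i = 1,…,n`, `s ≥ 0`, `u^i_{(0)} = u^i`): a commutative
`ℝ`-algebra `A` equipped with the variables `u (i,s)`, the partial derivatives
`pd (i,s) = ∂/∂u^i_{(s)}` (commuting `ℝ`-linear derivations with
`∂u^j_{(t)}/∂u^i_{(s)} = δ`), a finiteness witness `supp f` (each `f` depends on
finitely many of the variables), and the total `x`-derivative
`∂_x f = Σ_{i,s} u^i_{(s+1)} ∂f/∂u^i_{(s)}` (a finite sum on each `f`). -/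
structure DiffPolyAlg (n : ℕ) (A : Type*) [CommRing A] [Algebra ℝ A] where
  u : Fin n × ℕ → A
  pd : Fin n × ℕ → A → A
  pd_add : ∀ v f g, pd v (f + g) = pd v f + pd v g
  pd_smul : ∀ v (r : ℝ) f, pd v (r • f) = r • pd v f
  pd_mul : ∀ v f g, pd v (f * g) = pd v f * g + f * pd v g
  pd_u : ∀ v w, pd v (u w) = if v = w then 1 else 0
  pd_comm : ∀ v w f, pd v (pd w f) = pd w (pd v f)
  supp : A → Finset (Fin n × ℕ)
  pd_eq_zero : ∀ f v, v ∉ supp f → pd v f = 0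
  Dx : A → A
  Dx_add : ∀ f g, Dx (f + g) = Dx f + Dx g
  Dx_smul : ∀ (r : ℝ) f, Dx (r • f) = r • Dx f
  Dx_mul : ∀ f g, Dx (f * g) = Dx f * g + f * Dx g
  Dx_spec : ∀ f, ∀ S : Finset (Fin n × ℕ), supp f ⊆ S →
      Dx f = ∑ v ∈ S, u (v.1, v.2 + 1) * pd v f

namespace DiffPolyAlg

variable {n : ℕ} {A : Type*} [CommRing A] [Algebra ℝ A]

/-- The finite set of orders `s` such that `∂f/∂u^i_{(s)}` can be nonzero;
sums `Σ_s` below are taken over this set. -/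
def sset (D : DiffPolyAlg n A) (f : A) (i : Fin n) : Finset ℕ :=
  ((D.supp f).filter fun v => v.1 = i).image Prod.snd

/-- The components `{α,β}_i = Σ_{k,l,s} η^{kl} [ (∂_x^{s+1}β_l)(∂α_i/∂u^k_{(s)})
− (∂_x^{s+1}α_l)(∂β_i/∂u^k_{(s)}) ]` of the Poisson bracket of two reduced
1-forms in flat coordinates (the sum over the pairs `(k,s)` is restricted to the
finite set where the partial derivatives can be nonzero). -/
def pbracket (D : DiffPolyAlg n A) (η : Fin n → Fin n → ℝ)
    (α β : Fin n → A) : Fin n → A := fun i =>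
  (∑ v ∈ D.supp (α i), ∑ l, η v.1 l • (D.Dx^[v.2 + 1] (β l) * D.pd v (α i)))
    - ∑ v ∈ D.supp (β i), ∑ l, η v.1 l • (D.Dx^[v.2 + 1] (α l) * D.pd v (β i))

end DiffPolyAlg

namespace DiffPolyAlg

variable {n : ℕ} {A : Type*} [CommRing A] [Algebra ℝ A] (D : DiffPolyAlg n A)

def pdLinear (v : Fin n × ℕ) : A →ₗ[ℝ] A where
  toFun := D.pd v
  map_add' := D.pd_add v
  map_smul' := D.pd_smul v

def DxLinear : Module.End ℝ A where
  toFun := D.Dx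
  map_add' := D.Dx_add
  map_smul' := D.Dx_smul

theorem pd_zero (v : Fin n × ℕ) : D.pd v 0 = 0 := map_zero (D.pdLinear v)

theorem pd_sum {ι : Type*} (v : Fin n × ℕ) (s : Finset ι) (F : ι → A) :
    D.pd v (∑ x ∈ s, F x) = ∑ x ∈ s, D.pd v (F x) :=
  map_sum (D.pdLinear v) F s

theorem Dx_zero : D.Dx 0 = 0 := map_zero D.DxLinear

theorem Dx_sub (f g : A) : D.Dx (f - g) = D.Dx f - D.Dx g := map_sub D.DxLinear f g

theorem Dx_sum {ι : Type*} (s : Finset ι) (F : ι → A) :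
    D.Dx (∑ x ∈ s, F x) = ∑ x ∈ s, D.Dx (F x) :=
  map_sum D.DxLinear F s

theorem iterate_Dx_eq_pow (m : ℕ) : D.Dx^[m] = ⇑(D.DxLinear ^ m) :=
  (Module.End.coe_pow D.DxLinear m).symm

theorem iterate_Dx_sub (m : ℕ) (f g : A) :
    D.Dx^[m] (f - g) = D.Dx^[m] f - D.Dx^[m] g := by
  rw [D.iterate_Dx_eq_pow]
  exact map_sub _ f g

theorem iterate_Dx_smul (m : ℕ) (r : ℝ) (f : A) : D.Dx^[m] (r • f) = r • D.Dx^[m] f := by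
  rw [D.iterate_Dx_eq_pow]
  exact map_smul _ r f

theorem iterate_Dx_sum {ι : Type*} (m : ℕ) (s : Finset ι) (F : ι → A) :
    D.Dx^[m] (∑ x ∈ s, F x) = ∑ x ∈ s, D.Dx^[m] (F x) := by
  rw [D.iterate_Dx_eq_pow]
  exact map_sum _ F s

theorem sum_mul_pd_of_supp_subset (c : Fin n × ℕ → A) {f : A} {S : Finset (Fin n × ℕ)}
    (h : D.supp f ⊆ S) : ∑ v ∈ S, c v * D.pd v f = ∑ v ∈ D.supp f, c v * D.pd v f :=
  (Finset.sum_subset h fun v _ hv => by rw [D.pd_eq_zero f v hv, mul_zero]).symm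

/-- The variables on which `f` or one of its first partial derivatives may depend. -/
def supp₂ (f : A) : Finset (Fin n × ℕ) :=
  D.supp f ∪ (D.supp f).biUnion fun v => D.supp (D.pd v f)

theorem supp_subset_supp₂ (f : A) : D.supp f ⊆ D.supp₂ f := subset_union_left

theorem sum_supp₂_mul_pd_pd (c : Fin n × ℕ → A) (f : A) (w : Fin n × ℕ) :
    ∑ v ∈ D.supp₂ f, c v * D.pd v (D.pd w f)
      = ∑ v ∈ D.supp (D.pd w f), c v * D.pd v (D.pd w f) := by
  by_cases hw : w ∈ D.supp f
  · exact D.sum_mul_pd_of_supp_subset c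
      ((subset_biUnion_of_mem (fun v => D.supp (D.pd v f)) hw).trans subset_union_right)
  · simp only [D.pd_eq_zero f w hw, D.pd_zero, mul_zero, sum_const_zero]

theorem Dx_pd_eq_sum (f : A) (w : Fin n × ℕ) :
    D.Dx (D.pd w f) = ∑ v ∈ D.supp₂ f, D.u (v.1, v.2 + 1) * D.pd v (D.pd w f) := by
  rw [D.sum_supp₂_mul_pd_pd]
  exact D.Dx_spec _ _ subset_rfl

/-- `[∂/∂u^i_{(s+1)}, ∂_x] = ∂/∂u^i_{(s)}` and `[∂/∂u^i_{(0)}, ∂_x] = 0`. -/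
theorem pd_Dx (f : A) (w : Fin n × ℕ) :
    D.pd w (D.Dx f) = D.Dx (D.pd w f)
      + ∑ v ∈ D.supp₂ f, if w = (v.1, v.2 + 1) then D.pd v f else 0 := by
  rw [D.Dx_spec f _ (D.supp_subset_supp₂ f), D.pd_sum, D.Dx_pd_eq_sum, ← sum_add_distrib]
  refine sum_congr rfl fun v _ => ?_
  rw [D.pd_mul, D.pd_u, D.pd_comm, ite_mul, one_mul, zero_mul, add_comm]

/-- The evolutionary vector field `Σ_{i,s} ∂_x^s(b^i) ∂/∂u^i_{(s)}` with characteristic `b`. -/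
def evol (b : Fin n → A) : Derivation ℝ A A :=
  Derivation.mk'
    { toFun := fun f => ∑ v ∈ D.supp f, D.Dx^[v.2] (b v.1) * D.pd v f
      map_add' := fun f g => by
        let S := D.supp f ∪ D.supp g ∪ D.supp (f + g)
        rw [← D.sum_mul_pd_of_supp_subset _ (show D.supp f ⊆ S by grind),
          ← D.sum_mul_pd_of_supp_subset _ (show D.supp g ⊆ S by grind),
          ← D.sum_mul_pd_of_supp_subset _ (show D.supp (f + g) ⊆ S by grind)]
        simp only [D.pd_add, mul_add, sum_add_distrib]
      map_smul' := fun r f => by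
        let S := D.supp f ∪ D.supp (r • f)
        rw [← D.sum_mul_pd_of_supp_subset _ (show D.supp f ⊆ S by grind),
          ← D.sum_mul_pd_of_supp_subset _ (show D.supp (r • f) ⊆ S by grind)]
        simp only [D.pd_smul, mul_smul_comm, smul_sum, RingHom.id_apply] }
    fun f g => by
      let S := D.supp f ∪ D.supp g ∪ D.supp (f * g)
      simp only [LinearMap.coe_mk, AddHom.coe_mk, smul_eq_mul]
      rw [← D.sum_mul_pd_of_supp_subset _ (show D.supp f ⊆ S by grind),
        ← D.sum_mul_pd_of_supp_subset _ (show D.supp g ⊆ S by grind),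
        ← D.sum_mul_pd_of_supp_subset _ (show D.supp (f * g) ⊆ S by grind),
        mul_sum, mul_sum, ← sum_add_distrib]
      refine sum_congr rfl fun v _ => ?_
      rw [D.pd_mul]
      ring

theorem evol_apply (b : Fin n → A) (f : A) :
    D.evol b f = ∑ v ∈ D.supp f, D.Dx^[v.2] (b v.1) * D.pd v f := rfl

theorem evol_apply_of_supp_subset (b : Fin n → A) {f : A} {S : Finset (Fin n × ℕ)}
    (h : D.supp f ⊆ S) : D.evol b f = ∑ v ∈ S, D.Dx^[v.2] (b v.1) * D.pd v f :=
  (D.sum_mul_pd_of_supp_subset _ h).symm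

theorem evol_pd_eq_sum (b : Fin n → A) (f : A) (w : Fin n × ℕ) :
    D.evol b (D.pd w f) = ∑ v ∈ D.supp₂ f, D.Dx^[v.2] (b v.1) * D.pd v (D.pd w f) :=
  (D.sum_supp₂_mul_pd_pd _ f w).symm

theorem evol_Dx (b : Fin n → A) (f : A) : D.evol b (D.Dx f) = D.Dx (D.evol b f) := by
  set S := D.supp₂ f
  set T := S ∪ S.image (fun v => (v.1, v.2 + 1)) ∪ D.supp (D.Dx f)
  have hshift : ∀ v ∈ S, (v.1, v.2 + 1) ∈ T := fun v hv => by grind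
  have hshifted : ∑ w ∈ T, D.Dx^[w.2] (b w.1) *
        ∑ v ∈ S, (if w = (v.1, v.2 + 1) then D.pd v f else 0)
      = ∑ v ∈ D.supp f, D.Dx (D.Dx^[v.2] (b v.1)) * D.pd v f := by
    simp only [mul_sum, mul_ite, mul_zero]
    rw [sum_comm, ← D.sum_mul_pd_of_supp_subset _ (D.supp_subset_supp₂ f)]
    refine sum_congr rfl fun v hv => ?_
    rw [sum_ite_eq', if_pos (hshift v hv), Function.iterate_succ_apply']
  have hDxpd : ∑ w ∈ T, D.Dx^[w.2] (b w.1) * D.Dx (D.pd w f)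
      = ∑ v ∈ D.supp f, D.Dx^[v.2] (b v.1) * D.Dx (D.pd v f) :=
    (sum_subset ((D.supp_subset_supp₂ f).trans (by grind)) fun w _ hw => by
      rw [D.pd_eq_zero f w hw, D.Dx_zero, mul_zero]).symm
  rw [D.evol_apply_of_supp_subset b (subset_union_right : D.supp (D.Dx f) ⊆ T)]
  simp only [D.pd_Dx f, mul_add, sum_add_distrib]
  rw [hshifted, hDxpd, evol_apply, D.Dx_sum, add_comm, ← sum_add_distrib]
  simp only [D.Dx_mul]

theorem evol_iterate_Dx (b : Fin n → A) (m : ℕ) (f : A) :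
    D.evol b (D.Dx^[m] f) = D.Dx^[m] (D.evol b f) := by
  induction m with
  | zero => rfl
  | succ m ih => rw [Function.iterate_succ_apply', Function.iterate_succ_apply', D.evol_Dx, ih]

theorem evol_evol (a b : Fin n → A) (f : A) :
    D.evol a (D.evol b f)
      = ∑ v ∈ D.supp f, D.Dx^[v.2] (D.evol a (b v.1)) * D.pd v f
        + ∑ v ∈ D.supp₂ f, ∑ w ∈ D.supp₂ f,
            D.Dx^[v.2] (b v.1) * (D.Dx^[w.2] (a w.1) * D.pd w (D.pd v f)) := by
  have hsecond : ∑ v ∈ D.supp f, D.Dx^[v.2] (b v.1) * D.evol a (D.pd v f)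
      = ∑ v ∈ D.supp₂ f, ∑ w ∈ D.supp₂ f,
            D.Dx^[v.2] (b v.1) * (D.Dx^[w.2] (a w.1) * D.pd w (D.pd v f)) := by
    rw [sum_subset (D.supp_subset_supp₂ f) fun v _ hv => by
      rw [D.pd_eq_zero f v hv, map_zero, mul_zero]]
    simp only [D.evol_pd_eq_sum, mul_sum]
  rw [D.evol_apply b f, map_sum, ← hsecond, ← sum_add_distrib]
  refine sum_congr rfl fun v _ => ?_
  rw [Derivation.leibniz, smul_eq_mul, smul_eq_mul, D.evol_iterate_Dx]
  ring

theorem lie_evol (a b : Fin n → A) :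
    ⁅D.evol a, D.evol b⁆ = D.evol (fun k => D.evol a (b k) - D.evol b (a k)) := by
  ext f
  have hsymm : ∑ v ∈ D.supp₂ f, ∑ w ∈ D.supp₂ f,
        D.Dx^[v.2] (b v.1) * (D.Dx^[w.2] (a w.1) * D.pd w (D.pd v f))
      = ∑ v ∈ D.supp₂ f, ∑ w ∈ D.supp₂ f,
        D.Dx^[v.2] (a v.1) * (D.Dx^[w.2] (b w.1) * D.pd w (D.pd v f)) := by
    rw [sum_comm]
    refine sum_congr rfl fun v _ => sum_congr rfl fun w _ => ?_
    rw [D.pd_comm]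
    ring
  rw [Derivation.commutator_apply, D.evol_evol, D.evol_evol, hsymm, add_sub_add_right_eq_sub,
    ← sum_sub_distrib, evol_apply]
  refine sum_congr rfl fun v _ => ?_
  rw [← sub_mul, ← D.iterate_Dx_sub]

/-- The characteristic `Σ_l η^{kl} ∂_x χ_l` of the Hamiltonian flow generated by the 1-form `χ`. -/
def hamChar (η : Fin n → Fin n → ℝ) (χ : Fin n → A) : Fin n → A :=
  fun k => ∑ l, η k l • D.Dx (χ l)

theorem pbracket_eq_evol (η : Fin n → Fin n → ℝ) (α β : Fin n → A) (i : Fin n) :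
    D.pbracket η α β i = D.evol (D.hamChar η β) (α i) - D.evol (D.hamChar η α) (β i) := by
  have h : ∀ (χ ψ : Fin n → A) (j : Fin n), D.evol (D.hamChar η ψ) (χ j)
      = ∑ v ∈ D.supp (χ j), ∑ l, η v.1 l • (D.Dx^[v.2 + 1] (ψ l) * D.pd v (χ j)) :=
    fun χ ψ j => sum_congr rfl fun v _ => by
      simp only [hamChar, D.iterate_Dx_sum, D.iterate_Dx_smul, sum_mul, smul_mul_assoc,
        ← Function.iterate_succ_apply]
  rw [pbracket, h, h]

theorem evol_hamChar (a : Fin n → A) (η : Fin n → Fin n → ℝ) (χ : Fin n → A) (k : Fin n) :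
    D.evol a (D.hamChar η χ k) = D.hamChar η (fun l => D.evol a (χ l)) k := by
  simp only [hamChar, map_sum, Derivation.map_smul, D.evol_Dx]

theorem lie_evol_hamChar (η : Fin n → Fin n → ℝ) (x y : Fin n → A) :
    ⁅D.evol (D.hamChar η x), D.evol (D.hamChar η y)⁆
      = D.evol (D.hamChar η (D.pbracket η y x)) := by
  rw [lie_evol]
  congr 1
  funext k
  rw [evol_hamChar, evol_hamChar]
  simp only [hamChar, pbracket_eq_evol, D.Dx_sub, smul_sub, sum_sub_distrib]

end DiffPolyAlg

theorem pbracket_jacobi_general {n : ℕ} {A : Type*} [CommRing A]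
    [Algebra ℝ A] (D : DiffPolyAlg n A)
    (η : Fin n → Fin n → ℝ)
    (α β γ : Fin n → A) (i : Fin n) :
    D.pbracket η α (D.pbracket η β γ) i
      + D.pbracket η β (D.pbracket η γ α) i
      + D.pbracket η γ (D.pbracket η α β) i = 0 := by
  have hlie : ∀ x y f, D.evol (D.hamChar η (D.pbracket η y x)) f
      = D.evol (D.hamChar η x) (D.evol (D.hamChar η y) f)
        - D.evol (D.hamChar η y) (D.evol (D.hamChar η x) f) := fun x y f => by
    rw [← D.lie_evol_hamChar, Derivation.commutator_apply]
  simp only [D.pbracket_eq_evol, hlie, map_sub]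
  abel

/-- The Poisson bracket on 1-forms satisfies the Jacobi
identity: for all `α, β, γ ∈ 𝒜ⁿ` and every `i ∈ {1,…,n}`,
`{α, {β, γ}}_i + {β, {γ, α}}_i + {γ, {α, β}}_i = 0` in `𝒜`. -/
theorem pbracket_jacobi {n : ℕ} (hn : 1 ≤ n) {A : Type*} [CommRing A]
    [Algebra ℝ A] (D : DiffPolyAlg n A)
    (η : Fin n → Fin n → ℝ) (hη_symm : ∀ k l, η k l = η l k)
    (η' : Fin n → Fin n → ℝ)
    (hη_nondeg : ∀ i j, ∑ k, η i k * η' k j = if i = j then (1 : ℝ) else 0)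
    (α β γ : Fin n → A) (i : Fin n) :
    D.pbracket η α (D.pbracket η β γ) i
      + D.pbracket η β (D.pbracket η γ α) i
      + D.pbracket η γ (D.pbracket η α β) i = 0 :=
  pbracket_jacobi_general D η α β γ i
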